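/- If (Aₙ)_{n≥0} is the itinerary of some point x ∈ X^∞ and αₙ := A₀…Aₙ/∼ (the equivalence class of the word A₀…Aₙ), then (αₙ)_{n≥0} is an infinite path in the covering graph 𝒢. Conversely, every infinite path (αₙ)_{n≥0} in 𝒢 with H(α₀) = k arises in this way: there exists x ∈ X^∞ with itinerary (Aₙ)_{n≥0} such that αₙ = A₀…A_{n+k}/∼ for all n ≥ 0. -/

import Mathlib

open Set Filter Topology

/-- An abstract "sun-like" setting: a lifted graph `T` (metric space with a
translation `τ`, an embedded real line and its retraction `rR`), together with a
degree-one continuous map `F` whose set `X = closure(T ∖ T_ℝ) ∩ rR⁻¹[0,1)` is a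
finite disjoint union of compact intervals (the branches), each attached to the
invariant set `T_ℝ` at its minimum endpoint. Branches are parametrized by
order-embeddings `emb i : [0, len i] → T`. -/
structure SunLike (T : Type) [MetricSpace T] where
  /-- the translation `x ↦ x + 1`, a homeomorphism -/
  τ : Equiv.Perm T
  τ_cont : Continuous τ
  τ_symm_cont : Continuous τ.symm
  dist_inv : ∀ x y : T, dist (τ x) (τ y) = dist x y
  /-- the continuous degree-one map -/
  F : T → T
  F_cont : Continuous F
  deg1 : ∀ x, F (τ x) = τ (F x)
  /-- the embedded copy of `ℝ` -/
  line : ℝ → T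
  line_cont : Continuous line
  line_inj : Function.Injective line
  line_tau : ∀ s, τ (line s) = line (s + 1)
  /-- the natural retraction `r_ℝ : T → ℝ` -/
  rR : T → ℝ
  rR_cont : Continuous rR
  rR_line : ∀ s, rR (line s) = s
  rR_tau : ∀ x, rR (τ x) = rR x + 1
  /-- `T_ℝ = closure (⋃ n, F^n(ℝ))` -/
  TR : Set T
  TR_def : TR = closure (⋃ n : ℕ, F^[n] '' Set.range line)
  TR_inv : Set.MapsTo F TR TR
  /-- finitely many branches -/
  Λ : Type
  Λfin : Finite Λ
  len : Λ → ℝ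
  len_pos : ∀ i, 0 < len i
  /-- parametrization of the branch `Xⁱ` by the interval `[0, len i]` -/
  emb : Λ → ℝ → T
  emb_cont : ∀ i, ContinuousOn (emb i) (Set.Icc 0 (len i))
  emb_inj : ∀ i, Set.InjOn (emb i) (Set.Icc 0 (len i))
  /-- the attachment point `min Xⁱ = emb i 0` lies in `T_ℝ` -/
  attach_mem : ∀ i, emb i 0 ∈ TR
  /-- a branch meets `T_ℝ` exactly at its minimum endpoint -/
  branch_inter_TR : ∀ i, (emb i '' Set.Icc 0 (len i)) ∩ TR = {emb i 0}
  branch_open : ∀ i, IsOpen (emb i '' Set.Ioc 0 (len i))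
  /-- `X = closure(T ∖ T_ℝ) ∩ r_ℝ⁻¹([0,1))` is the union of the branches -/
  branches_def : closure (TRᶜ) ∩ rR ⁻¹' Set.Ico (0 : ℝ) 1 = ⋃ i, emb i '' Set.Icc 0 (len i)
  /-- distinct integer translates of branches are disjoint -/
  translates_disjoint : ∀ i j : Λ, ∀ p q : ℤ, (i ≠ j ∨ p ≠ q) →
    Disjoint ((τ ^ p) '' (emb i '' Set.Icc 0 (len i))) ((τ ^ q) '' (emb j '' Set.Icc 0 (len j)))
  /-- the natural retraction onto the branch `Xⁱ` -/
  ret : Λ → T → T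
  ret_cont : ∀ i, Continuous (ret i)
  ret_id : ∀ i, ∀ x ∈ emb i '' Set.Icc 0 (len i), ret i x = x
  ret_out : ∀ i x, x ∉ emb i '' Set.Icc 0 (len i) → ret i x = emb i 0

namespace SunLike

variable {T : Type} [MetricSpace T] (S : SunLike T)

/-- the branch `Xⁱ` -/
def branch (i : S.Λ) : Set T := S.emb i '' Set.Icc 0 (S.len i)

/-- `min Xⁱ`, the attachment point of the branch `Xⁱ` -/
def minB (i : S.Λ) : T := S.emb i 0

/-- `X`, the union of the branches -/
def X : Set T := ⋃ i, S.branch i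

/-- `X + ℤ`, the union of all integer translates of the branches -/
def XZ : Set T := ⋃ p : ℤ, (S.τ ^ p) '' S.X

/-- `X^∞`: points of `X` whose whole orbit stays in `X + ℤ` -/
def Xinf : Set T := {x | x ∈ S.X ∧ ∀ n : ℕ, S.F^[n] x ∈ S.XZ}

/-- the order of the branch `Xⁱ` (minimum at the attachment point) -/
def ble (i : S.Λ) (x y : T) : Prop :=
  ∃ s t : ℝ, s ∈ Set.Icc 0 (S.len i) ∧ t ∈ Set.Icc 0 (S.len i) ∧ s ≤ t ∧
    S.emb i s = x ∧ S.emb i t = y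

/-- `I ⊂ Xⁱ` positively `F^n`-covers `J + p`, where `J ⊂ Xʲ`: there are `x ≤ y` in `I`
with `r_j(F^n(x) - p) ≤ min J` and `max J ≤ r_j(F^n(y) - p)`. -/
def PosCover (n : ℕ) (i j : S.Λ) (I J : Set T) (p : ℤ) : Prop :=
  ∃ x y, x ∈ I ∧ y ∈ I ∧ S.ble i x y ∧
    (∀ z ∈ J, S.ble j (S.ret j ((S.τ ^ (-p)) (S.F^[n] x))) z) ∧
    (∀ z ∈ J, S.ble j z (S.ret j ((S.τ ^ (-p)) (S.F^[n] y))))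

/-- `rot S x s` : the rotation number of `x` exists and equals `s` -/
def rot (x : T) (s : ℝ) : Prop :=
  Tendsto (fun n : ℕ => (S.rR (S.F^[n] x) - S.rR x) / (n : ℝ)) atTop (𝓝 s)

end SunLike

/-- The basic partition `𝒫` of the branches of a sun-like map: finitely many disjoint
compact subintervals `A = [lo A, hi A] ⊂ X^{bi A}` with `F(A) ⊆ (X^{ℓ(A)} + p(A)) ∪ int T_ℝ`,
`F(min A) = min X^{ℓ(A)} + p(A) ∈ T_ℝ`, and such that every point of `X` whose image lies
in `X + ℤ` belongs to some element of `𝒫`. -/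
structure BasicPartition {T : Type} [MetricSpace T] (S : SunLike T) where
  P : Type
  Pfin : Fintype P
  bi : P → S.Λ
  lo : P → ℝ
  hi : P → ℝ
  lo_mem : ∀ A, lo A ∈ Set.Icc 0 (S.len (bi A))
  hi_mem : ∀ A, hi A ∈ Set.Icc 0 (S.len (bi A))
  lo_le_hi : ∀ A, lo A ≤ hi A
  ℓv : P → S.Λ
  pw : P → ℤ
  disj : ∀ A B : P, A ≠ B →
    Disjoint (S.emb (bi A) '' Set.Icc (lo A) (hi A)) (S.emb (bi B) '' Set.Icc (lo B) (hi B))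
  maps : ∀ A, S.F '' (S.emb (bi A) '' Set.Icc (lo A) (hi A)) ⊆
    (S.τ ^ pw A) '' S.branch (ℓv A) ∪ interior S.TR
  min_maps : ∀ A, S.F (S.emb (bi A) (lo A)) = (S.τ ^ pw A) (S.minB (ℓv A))
  min_maps_TR : ∀ A, S.F (S.emb (bi A) (lo A)) ∈ S.TR
  complete : ∀ x ∈ S.X, S.F x ∈ S.XZ → ∃ A, x ∈ S.emb (bi A) '' Set.Icc (lo A) (hi A)

namespace BasicPartition

variable {T : Type} [MetricSpace T] {S : SunLike T} (Q : BasicPartition S)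

/-- the element `A` of the partition, as a subset of `T` -/
def Aset (A : Q.P) : Set T := S.emb (Q.bi A) '' Set.Icc (Q.lo A) (Q.hi A)

/-- `x ∈ A + ℤ` -/
def memZ (x : T) (A : Q.P) : Prop := ∃ m : ℤ, x ∈ (S.τ ^ m) '' Q.Aset A

/-- `x ∈ X^∞` has itinerary `(Aₙ)` when `F^n(x) ∈ Aₙ + ℤ` for all `n` -/
def Itinerary (x : T) (A : ℕ → Q.P) : Prop := ∀ n : ℕ, Q.memZ (S.F^[n] x) (A n)

/-- The set `⟨A₀…Aₙ⟩ := F^n {x : ∀ i ≤ n, F^i(x) ∈ A_i + ℤ} ∩ X`, for a word stored in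
reverse: the list `[Aₙ, …, A₀]` represents the word `A₀…Aₙ`. -/
def cylL (w : List Q.P) : Set T :=
  S.F^[w.length - 1] ''
      {x | ∀ i, ∀ _ : i < w.length,
        Q.memZ (S.F^[i] x) (w.get ⟨w.length - 1 - i, by omega⟩)} ∩ S.X

/-- the partition element corresponding to the last letter of a word (stored in reverse) -/
def AsetW : List Q.P → Set T
  | [] => ∅
  | A :: _ => Q.Aset A

/-- the equivalence `A₀…Aₙ ∼ B₀…B_m` between words (stored in reverse):
the last `k+1` letters agree and `⟨A₀…A_{n-k}⟩ = A_{n-k} = B_{m-k} = ⟨B₀…B_{m-k}⟩`. -/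
def equivW (w w' : List Q.P) : Prop :=
  ∃ k : ℕ, k + 1 ≤ w.length ∧ k + 1 ≤ w'.length ∧ w.take (k + 1) = w'.take (k + 1) ∧
    Q.cylL (w.drop k) = Q.AsetW (w.drop k) ∧ Q.cylL (w'.drop k) = Q.AsetW (w'.drop k)

/-- the height `H(α)`: the length of the significant part of the word `w`,
i.e. the least `k` such that `w` is equivalent to its suffix of length `k+1`. -/
noncomputable def height (w : List Q.P) : ℕ := sInf {k | Q.equivW w (w.take (k + 1))}

/-- the word `A₀…Aₙ` of the first `n+1` symbols of an itinerary, stored in reverse -/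
def wrd (A : ℕ → Q.P) (n : ℕ) : List Q.P := ((List.range (n + 1)).map A).reverse

/-- the weight `p(A)` of any arrow leaving a vertex `α` with `⟨α⟩ ⊂ A` -/
def pwW : List Q.P → ℤ
  | [] => 0
  | A :: _ => Q.pw A

end BasicPartition

/-! ### Auxiliary lemmas -/

namespace SunLike

variable {T : Type} [MetricSpace T] (S : SunLike T)

lemma zpow_apply_apply (a b : ℤ) (x : T) :
    (S.τ ^ a) ((S.τ ^ b) x) = (S.τ ^ (a + b)) x := by
  rw [← Equiv.Perm.mul_apply, ← zpow_add]

lemma mem_zpow_image {s : Set T} {x : T} (q : ℤ) :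
    x ∈ (S.τ ^ q) '' s ↔ (S.τ ^ (-q)) x ∈ s := by
  constructor
  · rintro ⟨u, hu, rfl⟩
    simpa [S.zpow_apply_apply] using hu
  · intro h
    exact ⟨(S.τ ^ (-q)) x, h, by simp [S.zpow_apply_apply]⟩

lemma tau_zpow_cont (m : ℤ) : Continuous ⇑(S.τ ^ m) := by
  induction m using Int.induction_on with
  | zero => simpa using continuous_id
  | succ n ih =>
      have h : ⇑(S.τ ^ ((n : ℤ) + 1)) = ⇑(S.τ ^ (n : ℤ)) ∘ ⇑S.τ := by
        funext x
        rw [Function.comp_apply, ← Equiv.Perm.mul_apply, ← zpow_add_one]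
      rw [h]
      exact ih.comp S.τ_cont
  | pred n ih =>
      have h : ⇑(S.τ ^ (-(n : ℤ) - 1)) = ⇑(S.τ ^ (-(n : ℤ))) ∘ ⇑S.τ.symm := by
        funext x
        rw [Function.comp_apply, ← Equiv.Perm.inv_def, ← Equiv.Perm.mul_apply,
          ← zpow_sub_one]
      rw [h]
      exact ih.comp S.τ_symm_cont

lemma F_tau_symm (y : T) : S.F (S.τ.symm y) = S.τ.symm (S.F y) := by
  apply S.τ.injective
  rw [← S.deg1, Equiv.apply_symm_apply, Equiv.apply_symm_apply]

lemma F_tau_zpow (m : ℤ) (x : T) : S.F ((S.τ ^ m) x) = (S.τ ^ m) (S.F x) := by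
  induction m using Int.induction_on generalizing x with
  | zero => simp
  | succ n ih =>
      have h : ∀ y : T, (S.τ ^ ((n : ℤ) + 1)) y = (S.τ ^ (n : ℤ)) (S.τ y) := by
        intro y; rw [← Equiv.Perm.mul_apply, ← zpow_add_one]
      rw [h, h, ih, S.deg1]
  | pred n ih =>
      have h : ∀ y : T, (S.τ ^ (-(n : ℤ) - 1)) y = (S.τ ^ (-(n : ℤ))) (S.τ.symm y) := by
        intro y
        rw [← Equiv.Perm.inv_def, ← Equiv.Perm.mul_apply, ← zpow_sub_one]
      rw [h, h, ih, S.F_tau_symm]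

lemma iterate_tau_zpow (n : ℕ) (m : ℤ) (x : T) :
    S.F^[n] ((S.τ ^ m) x) = (S.τ ^ m) (S.F^[n] x) := by
  induction n generalizing x with
  | zero => simp
  | succ n ih =>
      rw [Function.iterate_succ_apply, Function.iterate_succ_apply, S.F_tau_zpow, ih]

lemma rR_tau_symm (x : T) : S.rR (S.τ.symm x) = S.rR x - 1 := by
  have h := S.rR_tau (S.τ.symm x)
  rw [Equiv.apply_symm_apply] at h
  linarith

lemma rR_zpow (m : ℤ) (x : T) : S.rR ((S.τ ^ m) x) = S.rR x + m := by
  induction m using Int.induction_on generalizing x with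
  | zero => simp
  | succ n ih =>
      have h : (S.τ ^ ((n : ℤ) + 1)) x = (S.τ ^ (n : ℤ)) (S.τ x) := by
        rw [← Equiv.Perm.mul_apply, ← zpow_add_one]
      rw [h, ih, S.rR_tau]
      push_cast; ring
  | pred n ih =>
      have h : (S.τ ^ (-(n : ℤ) - 1)) x = (S.τ ^ (-(n : ℤ))) (S.τ.symm x) := by
        rw [← Equiv.Perm.inv_def, ← Equiv.Perm.mul_apply, ← zpow_sub_one]
      rw [h, ih, S.rR_tau_symm]
      push_cast; ring

end SunLike

namespace BasicPartition

variable {T : Type} [MetricSpace T] {S : SunLike T} (Q : BasicPartition S)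

lemma memZ_zpow (p : ℤ) (x : T) (c : Q.P) :
    Q.memZ ((S.τ ^ p) x) c ↔ Q.memZ x c := by
  unfold memZ
  constructor
  · rintro ⟨m, hm⟩
    refine ⟨m - p, ?_⟩
    rw [S.mem_zpow_image] at hm ⊢
    rw [show -(m - p) = -m + p from by ring, ← S.zpow_apply_apply]
    exact hm
  · rintro ⟨m, hm⟩
    refine ⟨m + p, ?_⟩
    rw [S.mem_zpow_image] at hm ⊢
    rw [S.zpow_apply_apply, show -(m + p) + p = -m from by ring]
    exact hm

lemma Aset_subset_branch (c : Q.P) : Q.Aset c ⊆ S.branch (Q.bi c) :=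
  Set.image_mono (Set.Icc_subset_Icc (Q.lo_mem c).1 (Q.hi_mem c).2)

lemma Aset_subset_X (c : Q.P) : Q.Aset c ⊆ S.X := fun x hx =>
  Set.mem_iUnion.2 ⟨Q.bi c, Q.Aset_subset_branch c hx⟩

lemma Aset_compact (c : Q.P) : IsCompact (Q.Aset c) :=
  isCompact_Icc.image_of_continuousOn
    ((S.emb_cont (Q.bi c)).mono (Set.Icc_subset_Icc (Q.lo_mem c).1 (Q.hi_mem c).2))

lemma Aset_nonempty (c : Q.P) : (Q.Aset c).Nonempty :=
  ⟨S.emb (Q.bi c) (Q.lo c), Q.lo c, ⟨le_refl _, Q.lo_le_hi c⟩, rfl⟩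

lemma mem_Aset_of_memZ {c : Q.P} {x : T} (hX : x ∈ S.X) (h : Q.memZ x c) :
    x ∈ Q.Aset c := by
  obtain ⟨m, hm⟩ := h
  by_cases hm0 : m = 0
  · subst hm0
    simpa using hm
  · exfalso
    obtain ⟨j, hj⟩ := Set.mem_iUnion.1 hX
    have hdis := S.translates_disjoint j (Q.bi c) 0 m (Or.inr (Ne.symm hm0))
    exact Set.disjoint_left.1 hdis ⟨x, hj, by simp⟩
      (Set.image_mono (Q.Aset_subset_branch c) hm)

lemma wrd_length (g : ℕ → Q.P) (n : ℕ) : (Q.wrd g n).length = n + 1 := by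
  simp [BasicPartition.wrd]

lemma wrd_getElem (g : ℕ → Q.P) (n j : ℕ) (h : j < (Q.wrd g n).length) :
    (Q.wrd g n)[j] = g (n - j) := by
  rw [Q.wrd_length] at h
  simp only [BasicPartition.wrd, List.getElem_reverse, List.getElem_map,
    List.getElem_range, List.length_map, List.length_range]
  have e : n + 1 - 1 - j = n - j := by omega
  rw [e]

lemma wrd_succ (g : ℕ → Q.P) (n : ℕ) :
    Q.wrd g (n + 1) = g (n + 1) :: Q.wrd g n := by
  simp [BasicPartition.wrd, List.range_succ]

lemma mem_cylL_wrd (g : ℕ → Q.P) (N : ℕ) (z : T) :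
    z ∈ Q.cylL (Q.wrd g N) ↔
      (∃ u, (∀ i ≤ N, Q.memZ (S.F^[i] u) (g i)) ∧ S.F^[N] u = z) ∧ z ∈ S.X := by
  unfold BasicPartition.cylL
  constructor
  · rintro ⟨⟨u, hu, huz⟩, hzX⟩
    refine ⟨⟨u, ?_, ?_⟩, hzX⟩
    · intro i hi
      have hi' : i < (Q.wrd g N).length := by rw [Q.wrd_length]; omega
      have h2 := hu i hi'
      rw [List.get_eq_getElem, Q.wrd_getElem] at h2
      rwa [show N - ((Q.wrd g N).length - 1 - i) = i from by rw [Q.wrd_length]; omega] at h2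
    · rwa [show (Q.wrd g N).length - 1 = N from by rw [Q.wrd_length]; omega] at huz
  · rintro ⟨⟨u, hu, huz⟩, hzX⟩
    refine ⟨⟨u, ?_, ?_⟩, hzX⟩
    · intro i hi
      rw [List.get_eq_getElem, Q.wrd_getElem,
        show N - ((Q.wrd g N).length - 1 - i) = i from by rw [Q.wrd_length] at hi ⊢; omega]
      exact hu i (by rw [Q.wrd_length] at hi; omega)
    · rw [show (Q.wrd g N).length - 1 = N from by rw [Q.wrd_length]; omega]
      exact huz

lemma cylL_singleton (c : Q.P) : Q.cylL [c] = Q.Aset c := by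
  have hw : ([c] : List Q.P) = Q.wrd (fun _ => c) 0 := by simp [BasicPartition.wrd]
  ext z
  rw [hw, Q.mem_cylL_wrd]
  constructor
  · rintro ⟨⟨u, hu, huz⟩, hzX⟩
    have h0 := hu 0 le_rfl
    simp only [Function.iterate_zero, id_eq] at h0 huz
    subst huz
    exact Q.mem_Aset_of_memZ hzX h0
  · intro hz
    refine ⟨⟨z, ?_, by simp⟩, Q.Aset_subset_X c hz⟩
    intro i hi
    have hi0 : i = 0 := by omega
    subst hi0
    simp only [Function.iterate_zero, id_eq]
    exact ⟨0, by simpa using hz⟩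

lemma wrd_shift (g : ℕ → Q.P) (d m : ℕ) :
    Q.wrd (fun i => g (d + i)) m = (Q.wrd g (d + m)).take (m + 1) := by
  apply List.ext_getElem
  · simp [Q.wrd_length]
  · intro j h1 h2
    rw [List.getElem_take, Q.wrd_getElem, Q.wrd_getElem]
    show g (d + (m - j)) = g (d + m - j)
    congr 1
    rw [Q.wrd_length] at h1
    omega

lemma wrd_drop_drop (g : ℕ → Q.P) (n N j : ℕ) (hj : j ≤ N) :
    (Q.wrd g (n + N)).drop (n + j) = (Q.wrd g N).drop j := by
  apply List.ext_getElem
  · simp [Q.wrd_length]; omega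
  · intro i hi1 hi2
    rw [List.getElem_drop, List.getElem_drop, Q.wrd_getElem, Q.wrd_getElem]
    congr 1
    simp only [List.length_drop, Q.wrd_length] at hi1
    omega

lemma isClosed_memZ (c : Q.P) : IsClosed {x : T | Q.memZ x c} := by
  have hKc : IsCompact (Q.Aset c) := Q.Aset_compact c
  have himg : IsCompact (S.rR '' Q.Aset c) := hKc.image S.rR_cont
  have hnei : (S.rR '' Q.Aset c).Nonempty := (Q.Aset_nonempty c).image _
  set a := sInf (S.rR '' Q.Aset c) with ha
  set b := sSup (S.rR '' Q.Aset c) with hb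
  have hab : ∀ y ∈ Q.Aset c, a ≤ S.rR y ∧ S.rR y ≤ b := fun y hy =>
    ⟨csInf_le himg.bddBelow ⟨y, hy, rfl⟩, le_csSup himg.bddAbove ⟨y, hy, rfl⟩⟩
  rw [← closure_subset_iff_isClosed]
  intro x hx
  set c0 := S.rR x with hc0
  set U : Set T := S.rR ⁻¹' Set.Ioo (c0 - 1) (c0 + 1) with hU
  have hUopen : IsOpen U := isOpen_Ioo.preimage S.rR_cont
  have hxU : x ∈ U := by
    simp only [hU, Set.mem_preimage, Set.mem_Ioo, ← hc0]
    constructor <;> linarith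
  have hx2 : x ∈ closure ({y : T | Q.memZ y c} ∩ U) := by
    rw [mem_closure_iff] at hx ⊢
    intro o ho hxo
    obtain ⟨y, ⟨hyo, hyU⟩, hyZ⟩ := hx (o ∩ U) (ho.inter hUopen) ⟨hxo, hxU⟩
    exact ⟨y, hyo, hyZ, hyU⟩
  set M : Finset ℤ := Finset.Icc ⌈c0 - 1 - b⌉ ⌊c0 + 1 - a⌋ with hM
  set V : Set T := ⋃ m ∈ (M : Set ℤ), (S.τ ^ m) '' Q.Aset c with hV
  have hVclosed : IsClosed V := by
    apply Set.Finite.isClosed_biUnion M.finite_toSet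
    intro m _
    exact (hKc.image (S.tau_zpow_cont m)).isClosed
  have hsub : {y : T | Q.memZ y c} ∩ U ⊆ V := by
    rintro y ⟨⟨m, u, hu, rfl⟩, hyU⟩
    have hrr : S.rR ((S.τ ^ m) u) = S.rR u + m := S.rR_zpow m u
    obtain ⟨h1, h2⟩ := hab u hu
    simp only [hU, Set.mem_preimage, Set.mem_Ioo, hrr] at hyU
    refine Set.mem_iUnion₂.2 ⟨m, ?_, ⟨u, hu, rfl⟩⟩
    simp only [hM, Finset.coe_Icc, Set.mem_Icc]
    constructor
    · exact Int.ceil_le.2 (by linarith)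
    · exact Int.le_floor.2 (by linarith)
  have hxV : x ∈ V := (hVclosed.closure_subset_iff.2 hsub) hx2
  obtain ⟨m, -, hm⟩ := Set.mem_iUnion₂.1 hxV
  exact ⟨m, hm⟩

end BasicPartition

/-- (correspondence between itineraries and infinite paths in the covering
graph `𝒢`) If `(Aₙ)` is the itinerary of a point `x ∈ X^∞` and `αₙ := A₀…Aₙ/∼`, then
`(αₙ)` is an infinite path in `𝒢` (each word `A₀…Aₙ` is a vertex, i.e. `⟨A₀…Aₙ⟩ ≠ ∅`,
and consecutive words are joined by an arrow). Conversely, every infinite path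
`(αₙ)` in `𝒢`, represented by words `αₙ = (B₀…Bₙ prolonging α₀) /∼` with `H(α₀) = k`,
arises in this way: there is `x ∈ X^∞` with itinerary `(Aₙ)` such that
`αₙ = A₀…A_{n+k}/∼` for all `n ≥ 0`. -/
theorem itinerary_path_correspondence {T : Type} [MetricSpace T] (S : SunLike T)
    (Q : BasicPartition S) :
    (∀ (x : T), x ∈ S.Xinf → ∀ A : ℕ → Q.P, Q.Itinerary x A →
      (∀ n : ℕ, Q.cylL (Q.wrd A n) ≠ ∅) ∧
      (∀ n : ℕ, Q.wrd A (n + 1) = A (n + 1) :: Q.wrd A n)) ∧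
    (∀ (t : List Q.P) (B : ℕ → Q.P),
      (∀ n : ℕ, Q.cylL (Q.wrd B n ++ t) ≠ ∅) →
      ∀ k : ℕ, k = Q.height (Q.wrd B 0 ++ t) →
      ∃ x ∈ S.Xinf, ∃ A : ℕ → Q.P, Q.Itinerary x A ∧
        ∀ n : ℕ, Q.equivW (Q.wrd A (n + k)) (Q.wrd B n ++ t)) := by
  classical
  constructor
  · -- direct part
    intro x hx A hA
    refine ⟨?_, fun n => Q.wrd_succ A n⟩
    intro n
    rw [← Set.nonempty_iff_ne_empty]
    obtain ⟨hxX, horb⟩ := hx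
    obtain ⟨p, u, huX, hup⟩ := Set.mem_iUnion.1 (horb n)
    refine ⟨S.F^[n] ((S.τ ^ (-p : ℤ)) x), (Q.mem_cylL_wrd A n _).2 ⟨⟨(S.τ ^ (-p : ℤ)) x, ?_, rfl⟩, ?_⟩⟩
    · intro i _
      rw [S.iterate_tau_zpow, Q.memZ_zpow]
      exact hA i
    · rw [S.iterate_tau_zpow]
      have hux : (S.τ ^ (-p : ℤ)) (S.F^[n] x) = u := by
        rw [← hup, S.zpow_apply_apply]
        simp
      rw [hux]
      exact huX
  · -- converse part
    intro t B hne k hk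
    -- the infinite word `g` extending the reading of `wrd B n ++ t`
    set g : ℕ → Q.P :=
      fun i => if i < t.length then t.reverse.getD i (B 0) else B (i - t.length) with hg
    have hwg : ∀ n : ℕ, Q.wrd B n ++ t = Q.wrd g (n + t.length) := by
      intro n
      apply List.ext_getElem
      · simp [Q.wrd_length]
        omega
      · intro j h1 h2
        rw [List.getElem_append, Q.wrd_getElem]
        by_cases hj : j < (Q.wrd B n).length
        · rw [dif_pos hj, Q.wrd_getElem]
          rw [Q.wrd_length] at hj
          have e1 : ¬ (n + t.length - j < t.length) := by omega
          rw [hg]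
          simp only [e1, if_false]
          congr 1
          omega
        · rw [dif_neg hj]
          rw [Q.wrd_length] at hj
          have h1' : j < n + 1 + t.length := by
            simpa [Q.wrd_length] using h1
          have e1 : n + t.length - j < t.length := by omega
          rw [hg]
          simp only [e1, if_true]
          rw [List.getD_eq_getElem _ _ (by simp; omega), List.getElem_reverse]
          have e2 : t.length - 1 - (n + t.length - j) = j - (Q.wrd B n).length := by
            rw [Q.wrd_length]
            omega
          simp only [e2]
    set w₀ : List Q.P := Q.wrd B 0 ++ t with hw₀def
    subst hk
    set k := Q.height w₀ with hkdef
    have hlenw₀ : w₀.length = t.length + 1 := by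
      rw [hw₀def]
      simp [Q.wrd_length, Nat.add_comm]
    -- the set defining the height is nonempty
    have hself : Q.equivW w₀ (w₀.take (t.length + 1)) := by
      have htake : w₀.take (t.length + 1) = w₀ := by
        rw [← hlenw₀]
        exact List.take_length
      rw [htake]
      have hdrop : ∃ c, w₀.drop t.length = [c] := by
        rw [← List.length_eq_one_iff]
        simp [hlenw₀]
      obtain ⟨c, hc⟩ := hdrop
      refine ⟨t.length, by omega, by omega, rfl, ?_, ?_⟩ <;>
        · rw [hc, Q.cylL_singleton]
          rfl
    have hkt : k ≤ t.length := Nat.sInf_le hself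
    have hk_mem : Q.equivW w₀ (w₀.take (k + 1)) :=
      Nat.sInf_mem (⟨t.length, hself⟩ : Set.Nonempty {k | Q.equivW w₀ (w₀.take (k + 1))})
    obtain ⟨m₀, hm1, hm2, -, hc1, hc2⟩ := hk_mem
    have hm₀k : m₀ ≤ k := by
      simp only [List.length_take] at hm2
      omega
    have hm₀L : m₀ ≤ t.length := by omega
    set d := t.length - k with hd
    set A : ℕ → Q.P := fun i => g (d + i) with hA
    -- nested compact sets
    set E : ℕ → Set T :=
      fun n => {y | y ∈ Q.Aset (A 0) ∧ ∀ i ≤ n, Q.memZ (S.F^[i] y) (A i)} with hE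
    have hEsub : ∀ n, E (n + 1) ⊆ E n := fun n y hy => ⟨hy.1, fun i hi => hy.2 i (by omega)⟩
    have hEclosed : ∀ n, IsClosed (E n) := by
      intro n
      have hrepr : E n = Q.Aset (A 0) ∩ ⋂ i, ⋂ (_ : i ≤ n),
          (S.F^[i]) ⁻¹' {y | Q.memZ y (A i)} := by
        ext y
        simp [hE, Set.mem_iInter]
      rw [hrepr]
      exact ((Q.Aset_compact (A 0)).isClosed).inter
        (isClosed_iInter fun i => isClosed_iInter fun _ =>
          (Q.isClosed_memZ (A i)).preimage (S.F_cont.iterate i))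
    have hEne : ∀ n, (E n).Nonempty := by
      intro n
      obtain ⟨z, hz⟩ := Set.nonempty_iff_ne_empty.2 (hne n)
      rw [hwg n] at hz
      obtain ⟨⟨u, hu, -⟩, -⟩ := (Q.mem_cylL_wrd g (n + t.length) z).1 hz
      obtain ⟨m, v, hv, hvy⟩ := hu d (by omega)
      refine ⟨v, hv, ?_⟩
      intro i hi
      have hfv : S.F^[i] v = (S.τ ^ (-m : ℤ)) (S.F^[d + i] u) := by
        have hveq : v = (S.τ ^ (-m : ℤ)) (S.F^[d] u) := by
          rw [← hvy, S.zpow_apply_apply]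
          simp
        rw [hveq, S.iterate_tau_zpow]
        congr 1
        rw [show d + i = i + d from by omega, Function.iterate_add_apply]
      rw [hA]
      simp only
      rw [hfv, Q.memZ_zpow]
      exact hu (d + i) (by omega)
    have hEcomp : IsCompact (E 0) :=
      (Q.Aset_compact (A 0)).of_isClosed_subset (hEclosed 0) (fun y hy => hy.1)
    obtain ⟨x, hxE⟩ :=
      IsCompact.nonempty_iInter_of_sequence_nonempty_isCompact_isClosed E hEsub hEne
        hEcomp hEclosed
    simp only [Set.mem_iInter] at hxE
    have hxAset : x ∈ Q.Aset (A 0) := (hxE 0).1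
    have hitin : Q.Itinerary x A := fun n => (hxE n).2 n le_rfl
    refine ⟨x, ⟨Q.Aset_subset_X (A 0) hxAset, ?_⟩, A, hitin, ?_⟩
    · intro n
      obtain ⟨m, u, hu, he⟩ := hitin n
      exact Set.mem_iUnion.2 ⟨m, u, Q.Aset_subset_X _ hu, he⟩
    · intro n
      have hAw : Q.wrd A (n + k) = (Q.wrd g (n + t.length)).take (n + k + 1) := by
        rw [hA, Q.wrd_shift, show d + (n + k) = n + t.length from by omega]
      have hwn : Q.wrd B n ++ t = Q.wrd g (n + t.length) := hwg n
      have hw₀g : w₀ = Q.wrd g t.length := by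
        have := hwg 0
        rwa [show 0 + t.length = t.length from by omega] at this
      refine ⟨n + m₀, ?_, ?_, ?_, ?_, ?_⟩
      · rw [Q.wrd_length]
        omega
      · rw [hwn, Q.wrd_length]
        omega
      · rw [hAw, hwn, List.take_take]
        congr 1
        omega
      · have hlist : (Q.wrd A (n + k)).drop (n + m₀) = (w₀.take (k + 1)).drop m₀ := by
          rw [hAw, List.drop_take, List.drop_take, hw₀g,
            Q.wrd_drop_drop g n t.length m₀ hm₀L]
          congr 1
          omega
        rw [hlist, hc2]
      · have hlist : (Q.wrd B n ++ t).drop (n + m₀) = w₀.drop m₀ := by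
          rw [hwn, hw₀g, Q.wrd_drop_drop g n t.length m₀ hm₀L]
        rw [hlist, hc1]
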